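/- arXiv:2111.03694 — 12 statements merged into one kernel-verified Lean document; each statement's English description precedes it below -/
import Mathlib

section
/- Let m ≥ 1, let M be an m×m real matrix with nonnegative entries satisfying M + Mᵀ = J − I (where J is the all-ones matrix and I the identity), and let p ∈ ℝᵐ be a vector with nonnegative entries such that M·p = 𝟏 (the all-ones vector). Then ∑_{i=1}^m p_i ≥ 2. -/
/-- If `M` is an `m × m` real matrix with nonnegative entries with `M + Mᵀ = J - I`,
and `p` is a nonnegative vector with `M ⬝ p = 𝟏`, then `∑ i, p i ≥ 2`. -/
theorem sum_ge_two_of_tournament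
    (m : ℕ) (hm : 1 ≤ m)
    (M : Matrix (Fin m) (Fin m) ℝ)
    (hMnn : ∀ i j, 0 ≤ M i j)
    (hMJ : M + M.transpose = Matrix.of (fun _ _ => (1 : ℝ)) - 1)
    (p : Fin m → ℝ) (hp : ∀ i, 0 ≤ p i)
    (hMp : M.mulVec p = fun _ => 1) :
    2 ≤ ∑ i, p i := by
  set s := ∑ i, p i with hs
  -- quadratic form with M is s
  have hq : ∑ i, ∑ j, p i * M i j * p j = s := by
    have h1 : ∀ i, ∑ j, p i * M i j * p j = p i * 1 := by
      intro i
      have h2 := congrFun hMp i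
      simp only [Matrix.mulVec, dotProduct] at h2
      rw [← h2, Finset.mul_sum]
      exact Finset.sum_congr rfl fun j _ => by ring
    simp [h1, hs]
  -- quadratic form with Mᵀ is also s
  have hq' : ∑ i, ∑ j, p i * M.transpose i j * p j = s := by
    rw [Finset.sum_comm, ← hq]
    exact Finset.sum_congr rfl fun i _ => Finset.sum_congr rfl fun j _ => by
      simp [Matrix.transpose_apply]; ring
  -- quadratic form with J - I
  have hJ : ∑ i, ∑ j, p i * ((Matrix.of (fun _ _ => (1 : ℝ)) - 1) i j) * p j
      = s * s - ∑ i, p i * p i := by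
    calc ∑ i, ∑ j, p i * ((Matrix.of (fun _ _ => (1 : ℝ)) - 1) i j) * p j
        = ∑ i, ∑ j, (p i * p j - if i = j then p i * p j else 0) := by
          refine Finset.sum_congr rfl fun i _ => Finset.sum_congr rfl fun j _ => ?_
          simp only [Matrix.sub_apply, Matrix.of_apply, Matrix.one_apply]
          split_ifs <;> ring
      _ = ∑ i, (p i * s - p i * p i) := by
          refine Finset.sum_congr rfl fun i _ => ?_
          rw [Finset.sum_sub_distrib, ← Finset.mul_sum, Finset.sum_ite_eq]
          simp [hs]
      _ = s * s - ∑ i, p i * p i := by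
          rw [Finset.sum_sub_distrib, ← Finset.sum_mul]
  -- combine
  have hcomb : 2 * s = s * s - ∑ i, p i * p i := by
    have := congrArg (fun N : Matrix (Fin m) (Fin m) ℝ =>
      ∑ i, ∑ j, p i * N i j * p j) hMJ
    simp only [Matrix.add_apply] at this
    have hsplit : ∑ i, ∑ j, p i * (M i j + M.transpose i j) * p j
        = (∑ i, ∑ j, p i * M i j * p j) + ∑ i, ∑ j, p i * M.transpose i j * p j := by
      rw [← Finset.sum_add_distrib]
      refine Finset.sum_congr rfl fun i _ => ?_
      rw [← Finset.sum_add_distrib]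
      exact Finset.sum_congr rfl fun j _ => by ring
    rw [← hJ, ← this, hsplit, hq, hq']
    ring
  -- s > 0
  have hspos : 0 < s := by
    rcases lt_or_eq_of_le (Finset.sum_nonneg fun i _ => hp i) with h | h
    · exact h
    · exfalso
      have hz : ∀ i, p i = 0 := by
        intro i
        have := (Finset.sum_eq_zero_iff_of_nonneg fun i _ => hp i).mp h.symm
        exact this i (Finset.mem_univ i)
      have i0 : Fin m := ⟨0, hm⟩
      have := congrFun hMp i0
      simp [Matrix.mulVec, dotProduct, hz] at this
  have hsq : 2 * s ≤ s * s := by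
    rw [hcomb]
    have : (0:ℝ) ≤ ∑ i, p i * p i :=
      Finset.sum_nonneg fun i _ => mul_nonneg (hp i) (hp i)
    linarith [hcomb, this]
  nlinarith
end

section
/- Let m ≥ 2 and let plu ∈ ℝᵐ satisfy plu_i ∈ [0,1) for every i and ∑_{i=1}^m plu_i = 1. Then ∑_{i=1}^m plu_i/(1 − plu_i) ≥ 1/(1 − ‖plu‖²), where ‖plu‖ is the Euclidean norm. -/
/-- If `plu ∈ ℝᵐ` has entries in `[0, 1)` summing to `1`, then
`∑ i, plu i / (1 - plu i) ≥ 1 / (1 - ‖plu‖²)` (Euclidean norm). -/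
theorem sum_div_one_sub_ge_inv (m : ℕ) (hm : 2 ≤ m)
    (plu : Fin m → ℝ)
    (hnn : ∀ i, 0 ≤ plu i) (hlt : ∀ i, plu i < 1)
    (hsum : ∑ i, plu i = 1) :
    1 / (1 - ∑ i, plu i ^ 2) ≤ ∑ i, plu i / (1 - plu i) := by
  have hS : (1 : ℝ) - ∑ i, plu i ^ 2 = ∑ i, plu i * (1 - plu i) := by
    simp [mul_sub, Finset.sum_sub_distrib, hsum, sq]
  have hex : ∃ i, 0 < plu i := by
    by_contra h
    push_neg at h
    have : ∑ i, plu i = 0 :=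
      Finset.sum_eq_zero fun i _ => le_antisymm (h i) (hnn i)
    simp [this] at hsum
  obtain ⟨j, hj⟩ := hex
  have hSpos : 0 < ∑ i, plu i * (1 - plu i) := by
    refine Finset.sum_pos' (fun i _ => mul_nonneg (hnn i) (by linarith [hlt i])) ?_
    exact ⟨j, Finset.mem_univ j, mul_pos hj (by linarith [hlt j])⟩
  rw [hS, div_le_iff₀ hSpos]
  have hcs := Finset.sum_sq_le_sum_mul_sum_of_sq_eq_mul Finset.univ
    (r := plu) (f := fun i => plu i / (1 - plu i)) (g := fun i => plu i * (1 - plu i))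
    (fun i _ => div_nonneg (hnn i) (by linarith [hlt i]))
    (fun i _ => mul_nonneg (hnn i) (by linarith [hlt i]))
    (fun i _ => by
      have : (1 : ℝ) - plu i ≠ 0 := by linarith [hlt i]
      field_simp)
  rw [hsum] at hcs
  simpa using hcs
end

section
/- Let m ≥ 2 and let plu ∈ ℝᵐ satisfy plu_i ∈ [0,1) for every i and ∑_{i=1}^m plu_i = 1. Then ∑_{i=1}^m plu_i/(1 − plu_i) ≥ 3‖plu‖² + 1/2, where ‖plu‖ is the Euclidean norm. -/
private lemma cert1 (z v w : ℝ) (hz : 0 ≤ z) (hv : 0 ≤ v) (hw : 0 ≤ w) :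
    0 ≤ 2*w^5 + 9*v*w^4 + 15*v^2*w^3 + 10*v^3*w^2 + 8*z*w^4 + 26*z*v*w^3 + 26*z*v^2*w^2
      + 10*z^2*w^3 + 21*z^2*v*w^2 + 3*z^2*v^2*w + 2*z^2*v^3 + 4*z^3*w^2 + 4*z^3*v*w + 4*z^3*v^2 := by
  have m : ∀ i j k : ℕ, (0:ℝ) ≤ z^i*v^j*w^k := fun i j k =>
    mul_nonneg (mul_nonneg (pow_nonneg hz i) (pow_nonneg hv j)) (pow_nonneg hw k)
  linarith [m 0 0 5, m 0 1 4, m 0 2 3, m 0 3 2, m 1 0 4, m 1 1 3, m 1 2 2,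
    m 2 0 3, m 2 1 2, m 2 2 1, m 2 3 0, m 3 0 2, m 3 1 1, m 3 2 0]

private lemma cert2 (z v w : ℝ) (hz : 0 ≤ z) (hv : 0 ≤ v) (hw : 0 ≤ w) :
    0 ≤ 2*w^8 + 7*v*w^7 + 7*v^2*w^6 + 1*v^3*w^5 + 5*v^4*w^4 + 17*v^5*w^3 + 17*v^6*w^2 + 7*v^7*w + 1*v^8 + 28*z*w^7 + 72*z*v*w^6 + 42*z*v^2*w^5 + 26*z*v^3*w^4 + 144*z*v^4*w^3 + 204*z*v^5*w^2 + 106*z*v^6*w + 18*z*v^7 + 158*z^2*w^6 + 273*z^2*v*w^5 + 117*z^2*v^2*w^4 + 430*z^2*v^3*w^3 + 948*z^2*v^4*w^2 + 657*z^2*v^5*w + 137*z^2*v^6 + 456*z^3*w^5 + 486*z^3*v*w^4 + 588*z^3*v^2*w^3 + 2112*z^3*v^3*w^2 + 2124*z^3*v^4*w + 570*z^3*v^5 + 702*z^4*w^4 + 585*z^4*v*w^3 + 2241*z^4*v^2*w^2 + 3753*z^4*v^3*w + 1395*z^4*v^4 + 540*z^5*w^3 + 972*z^5*v*w^2 + 3402*z^5*v^2*w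 + 1998*z^5*v^3 + 162*z^6*w^2 + 1215*z^6*v*w + 1539*z^6*v^2 + 486*z^7*v := by
  have m : ∀ i j k : ℕ, (0:ℝ) ≤ z^i*v^j*w^k := fun i j k =>
    mul_nonneg (mul_nonneg (pow_nonneg hz i) (pow_nonneg hv j)) (pow_nonneg hw k)
  linarith [m 0 0 8, m 0 1 7, m 0 2 6, m 0 3 5, m 0 4 4, m 0 5 3, m 0 6 2, m 0 7 1, m 0 8 0, m 1 0 7, m 1 1 6, m 1 2 5, m 1 3 4, m 1 4 3, m 1 5 2, m 1 6 1, m 1 7 0, m 2 0 6, m 2 1 5, m 2 2 4, m 2 3 3, m 2 4 2, m 2 5 1, m 2 6 0, m 3 0 5, m 3 1 4, m 3 2 3, m 3 3 2, m 3 4 1, m 3 5 0, m 4 0 4, m 4 1 3, m 4 2 2, m 4 3 1, m 4 4 0, m 5 0 3, m 5 1 2, m 5 2 1, m 5 3 0, m 6 0 2, m 6 1 1, m 6 2 0, m 7 1 0]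

private lemma master (a b s : ℝ) (ha1 : a < 1) (hb0 : 0 ≤ b) (hba : b ≤ a) (hs0 : 0 ≤ s)
    (hsum : a + b + s = 1) :
    0 ≤ (a/(1-a) - 3*a^2 - a/2) + (b/(1-b) - 3*b^2 - b/2)
        + s*(1/(1 - min b s) - 3*(min b s) - 1/2) := by
  have hs' : s = 1 - a - b := by linarith
  subst hs'
  rcases le_total (1 - a - b) b with hc | hc
  · rw [min_eq_right hc, show (1:ℝ) - (1-a-b) = a + b by ring]
    have h1a : 0 < 1 - a := by linarith
    have h1b : 0 < 1 - b := by linarith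
    have hab : 0 < a + b := by linarith
    have hnum : 0 ≤ a*(3*a-1)*(2*a-1)*(1-b)*(a+b) + b*(3*b-1)*(2*b-1)*(1-a)*(a+b)
        + (1-a-b)*(3*(1-a-b)-1)*(2*(1-a-b)-1)*(1-a)*(1-b) := by
      have := cert1 (1-a-b) (a+2*b-1) (a-b) (by linarith) (by linarith) (by linarith)
      linarith
    have key : (a/(1-a) - 3*a^2 - a/2) + (b/(1-b) - 3*b^2 - b/2)
        + (1-a-b)*(1/(a+b) - 3*(1-a-b) - 1/2)
        = (a*(3*a-1)*(2*a-1)*(1-b)*(a+b) + b*(3*b-1)*(2*b-1)*(1-a)*(a+b)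
        + (1-a-b)*(3*(1-a-b)-1)*(2*(1-a-b)-1)*(1-a)*(1-b)) / (2*(1-a)*(1-b)*(a+b)) := by
      field_simp
      ring
    rw [key]
    positivity
  · rw [min_eq_left hc]
    have h1a : 0 < 1 - a := by linarith
    have h1b : 0 < 1 - b := by linarith
    have hnum : 0 ≤ a*(3*a-1)*(2*a-1)*(1-b) + (1-a)^2*(3*b-1)*(2*b-1) := by
      have := cert2 b (1-a-2*b) (a-b) hb0 (by linarith) (by linarith)
      linarith
    have key : (a/(1-a) - 3*a^2 - a/2) + (b/(1-b) - 3*b^2 - b/2)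
        + (1-a-b)*(1/(1-b) - 3*b - 1/2)
        = (a*(3*a-1)*(2*a-1)*(1-b) + (1-a)^2*(3*b-1)*(2*b-1)) / (2*(1-a)*(1-b)) := by
      field_simp
      ring
    rw [key]
    positivity


private lemma ptwise (p u : ℝ) (hp0 : 0 ≤ p) (hpu : p ≤ u) (hu : u ≤ 1/3) :
    p * (1/(1-u) - 3*u - 1/2) ≤ p/(1-p) - 3*p^2 - p/2 := by
  have h1 : 0 < 1 - p := by linarith
  have h2 : 0 < 1 - u := by linarith
  rw [← sub_nonneg]
  have key : (p/(1-p) - 3*p^2 - p/2) - p*(1/(1-u) - 3*u - 1/2)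
      = p*(u-p)*(3*(1-p)*(1-u)-1)/((1-p)*(1-u)) := by
    field_simp
    ring
  rw [key]
  apply div_nonneg _ (by positivity)
  have h3 : 0 ≤ 3*(1-p)*(1-u)-1 := by nlinarith
  exact mul_nonneg (mul_nonneg hp0 (by linarith)) h3


/-- If `plu ∈ ℝᵐ` has entries in `[0, 1)` summing to `1`, then
`∑ i, plu i / (1 - plu i) ≥ 3‖plu‖² + 1/2` (Euclidean norm). -/
theorem sum_div_one_sub_ge_three_normsq (m : ℕ) (hm : 2 ≤ m)
    (plu : Fin m → ℝ)
    (hnn : ∀ i, 0 ≤ plu i) (hlt : ∀ i, plu i < 1)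
    (hsum : ∑ i, plu i = 1) :
    3 * (∑ i, plu i ^ 2) + 1 / 2 ≤ ∑ i, plu i / (1 - plu i) := by
  set g : Fin m → ℝ := fun k => plu k/(1-plu k) - 3*plu k^2 - plu k/2 with hg
  have hgsum : ∑ k, g k = (∑ k, plu k/(1-plu k)) - 3*(∑ k, plu k^2) - 1/2 := by
    simp only [hg]
    rw [Finset.sum_sub_distrib, Finset.sum_sub_distrib, ← Finset.sum_div, hsum, ← Finset.mul_sum]
  suffices hpos : 0 ≤ ∑ k, g k by linarith
  obtain ⟨i, -, hi⟩ := Finset.exists_max_image Finset.univ plu ⟨⟨0, by omega⟩, Finset.mem_univ _⟩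
  have hne2 : (Finset.univ.erase i).Nonempty := by
    rw [← Finset.card_pos, Finset.card_erase_of_mem (Finset.mem_univ i), Finset.card_univ,
      Fintype.card_fin]
    omega
  obtain ⟨j, hj, hjm⟩ := Finset.exists_max_image _ plu hne2
  set R := (Finset.univ.erase i).erase j with hR
  set s := ∑ k ∈ R, plu k with hs
  have e2 : plu j + s = ∑ k ∈ Finset.univ.erase i, plu k := Finset.add_sum_erase _ plu hj
  have e1 : plu i + ∑ k ∈ Finset.univ.erase i, plu k = 1 := by
    rw [Finset.add_sum_erase _ plu (Finset.mem_univ i)]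
    exact hsum
  have habs : plu i + plu j + s = 1 := by linarith
  have hba : plu j ≤ plu i := hi j (Finset.mem_univ j)
  have hs0 : 0 ≤ s := Finset.sum_nonneg fun k _ => hnn k
  set u := min (plu j) s with hu
  have hu3 : u ≤ 1/3 := by
    by_contra hcon
    push_neg at hcon
    have h1 : 1/3 < plu j := lt_of_lt_of_le hcon (min_le_left _ _)
    have h2 : (1:ℝ)/3 < s := lt_of_lt_of_le hcon (min_le_right _ _)
    linarith
  have hrest : ∀ k ∈ R, plu k * (1/(1-u) - 3*u - 1/2) ≤ g k := by
    intro k hk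
    apply ptwise _ _ (hnn k) _ hu3
    apply le_min
    · exact hjm k (Finset.mem_of_mem_erase hk)
    · exact Finset.single_le_sum (fun t _ => hnn t) hk
  have hrest2 : s * (1/(1-u) - 3*u - 1/2) ≤ ∑ k ∈ R, g k := by
    rw [hs, Finset.sum_mul]
    exact Finset.sum_le_sum hrest
  have hsplit : ∑ k, g k = g i + g j + ∑ k ∈ R, g k := by
    rw [← Finset.add_sum_erase _ g (Finset.mem_univ i), ← Finset.add_sum_erase _ g hj]
    ring
  have hmaster := master (plu i) (plu j) s (hlt i) (hnn j) hba hs0 habs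
  rw [← hu] at hmaster
  have hgi : g i = plu i/(1-plu i) - 3*plu i^2 - plu i/2 := rfl
  have hgj : g j = plu j/(1-plu j) - 3*plu j^2 - plu j/2 := rfl
  have step : 0 ≤ g i + g j + ∑ k ∈ R, g k := by
    rw [hgi, hgj]
    linarith [hmaster, hrest2]
  linarith [step, hsplit]
end

section
/- For every real number y with 0 < y ≤ 1, max(1 + √y, 1/y) ≥ 1.75487. (The minimum of this maximum over y ∈ (0,1] is attained at the unique real root of y³ − y² + 2y − 1, approximately 0.56984.) -/
/-- For every real `y` with `0 < y ≤ 1`, `max (1 + √y) (1/y) ≥ 1.75487`. -/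
theorem max_one_add_sqrt_inv_ge (y : ℝ) (hy : 0 < y) (hy1 : y ≤ 1) :
    (1.75487 : ℝ) ≤ max (1 + Real.sqrt y) (1 / y) := by
  rcases le_or_gt y 0.56984 with h | h
  · refine le_trans ?_ (le_max_right _ _)
    rw [le_div_iff₀ hy]
    nlinarith
  · refine le_trans ?_ (le_max_left _ _)
    have hs : (0.75487 : ℝ) ≤ Real.sqrt y := by
      rw [show (0.75487:ℝ) = Real.sqrt (0.75487^2) by rw [Real.sqrt_sq]; norm_num]
      apply Real.sqrt_le_sqrt; nlinarith
    linarith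
end

section
/- For every election on m candidates and n voters in which plu(j) < 1 for every candidate j, the vector defined by p_j = plu(j)/(1 − plu(j)) satisfies, for every candidate i, ∑_{j ≠ i} s_{i≻j}·plu(j)/(1 − plu(j)) ≤ 1 − plu(i). -/
/-- Fraction of the `n` voters who strictly prefer candidate `i` to candidate `j`.
A voter `v`'s preference order is encoded by `rk v : Fin m → Fin m`, an injective map
sending each candidate to its rank position (`0` = most preferred);
`i ≻_v j` means `rk v i < rk v j`. -/
noncomputable def sFrac {n m : ℕ} (rk : Fin n → Fin m → Fin m) (i j : Fin m) : ℝ :=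
  ((Finset.univ.filter fun v => rk v i < rk v j).card : ℝ) / n

/-- Fraction of the voters whose top-ranked candidate is `i`. -/
noncomputable def pluFrac {n m : ℕ} (rk : Fin n → Fin m → Fin m) (i : Fin m) : ℝ :=
  ((Finset.univ.filter fun v => (rk v i : ℕ) = 0).card : ℝ) / n


/-- For every election in which `plu(j) < 1` for every candidate `j`, the vector
`p_j = plu(j)/(1 - plu(j))` satisfies `∑_{j ≠ i} s_{i≻j} p_j ≤ 1 - plu(i)` for every `i`. -/
theorem smartDictatorship_feasible
    (m n : ℕ) (hm : 0 < m) (hn : 0 < n)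
    (rk : Fin n → Fin m → Fin m) (hrk : ∀ v, Function.Injective (rk v))
    (hplu : ∀ j, pluFrac rk j < 1) :
    ∀ i : Fin m, ∑ j ∈ Finset.univ.filter (fun j => j ≠ i),
        sFrac rk i j * (pluFrac rk j / (1 - pluFrac rk j)) ≤ 1 - pluFrac rk i := by
  intro i
  have hn' : (0:ℝ) < n := by exact_mod_cast hn
  have hp0 : ∀ j : Fin m, 0 ≤ pluFrac rk j := by
    intro j; unfold pluFrac; positivity
  -- termwise bound : each term ≤ pluFrac rk j
  have hterm : ∀ j ∈ Finset.univ.filter (fun j => j ≠ i),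
      sFrac rk i j * (pluFrac rk j / (1 - pluFrac rk j)) ≤ pluFrac rk j := by
    intro j _
    have hp1 : (0:ℝ) < 1 - pluFrac rk j := by linarith [hplu j]
    have hs : sFrac rk i j ≤ 1 - pluFrac rk j := by
      have hcard : (Finset.univ.filter fun v => rk v i < rk v j).card
          + (Finset.univ.filter fun v => (rk v j : ℕ) = 0).card ≤ n := by
        rw [← Finset.card_union_of_disjoint]
        · simpa using Finset.card_le_card
            ((Finset.univ.filter fun v => rk v i < rk v j) ∪
             (Finset.univ.filter fun v => (rk v j : ℕ) = 0)).subset_univ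
        · rw [Finset.disjoint_filter]
          intro v _ hlt hz
          rw [Fin.lt_def, hz] at hlt
          omega
      have key : (((Finset.univ.filter fun v => rk v i < rk v j).card
          + (Finset.univ.filter fun v => (rk v j : ℕ) = 0).card : ℕ) : ℝ) / n ≤ 1 := by
        rw [div_le_one hn']; exact_mod_cast hcard
      push_cast at key
      rw [add_div] at key
      unfold sFrac pluFrac
      linarith
    calc sFrac rk i j * (pluFrac rk j / (1 - pluFrac rk j))
        ≤ (1 - pluFrac rk j) * (pluFrac rk j / (1 - pluFrac rk j)) :=
          mul_le_mul_of_nonneg_right hs (div_nonneg (hp0 j) hp1.le)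
      _ = pluFrac rk j := by field_simp
  refine le_trans (Finset.sum_le_sum hterm) ?_
  -- ∑_{j≠i} pluFrac ≤ 1 - pluFrac i
  have htotal : ∑ j : Fin m, pluFrac rk j ≤ 1 := by
    have hcard : ∑ j : Fin m, (Finset.univ.filter fun v => (rk v j : ℕ) = 0).card ≤ n := by
      rw [← Finset.card_biUnion]
      · simpa using Finset.card_le_card
          (Finset.univ.biUnion fun j => Finset.univ.filter fun v => (rk v j : ℕ) = 0).subset_univ
      · intro a _ b _ hab
        rw [Function.onFun, Finset.disjoint_filter]
        intro v _ ha hb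
        exact hab (hrk v (Fin.ext (ha.trans hb.symm)))
    unfold pluFrac
    rw [← Finset.sum_div, div_le_one hn']
    exact_mod_cast hcard
  have := Finset.sum_erase_eq_sub (f := fun j => pluFrac rk j) (Finset.mem_univ i)
  rw [Finset.filter_ne']
  rw [this]
  linarith
end

section
/- For every election on m candidates and n voters in which plu(j) < 1 for every candidate j, and for every nonempty proper subset I of the candidate set, ∑_{j ∉ I} s_{I≻j}·plu(j)/(1 − plu(j)) ≤ 1 − max_{i ∈ I} s_{i≻I^c}, where s_{I≻j} is the fraction of voters who prefer every member of I to j, and s_{i≻I^c} is the fraction of voters who prefer i to every candidate outside I. -/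
/-- Fraction of the voters who prefer every member of the set `I` to candidate `j`. -/
noncomputable def sSetFrac {n m : ℕ} (rk : Fin n → Fin m → Fin m)
    (I : Finset (Fin m)) (j : Fin m) : ℝ :=
  ((Finset.univ.filter fun v => ∀ i ∈ I, rk v i < rk v j).card : ℝ) / n

/-- Fraction of the voters who prefer candidate `i` to every candidate outside `I`. -/
noncomputable def sTopFrac {n m : ℕ} (rk : Fin n → Fin m → Fin m)
    (i : Fin m) (I : Finset (Fin m)) : ℝ :=
  ((Finset.univ.filter fun v => ∀ j ∈ Iᶜ, rk v i < rk v j).card : ℝ) / n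

/-- For every election with `plu(j) < 1` for all `j`, and every nonempty proper subset `I`
of the candidates, `∑_{j ∉ I} s_{I≻j}·plu(j)/(1-plu(j)) ≤ 1 - max_{i ∈ I} s_{i≻Iᶜ}`. -/
theorem smartDictatorship_feasible_sets
    (m n : ℕ) (hm : 0 < m) (hn : 0 < n)
    (rk : Fin n → Fin m → Fin m) (hrk : ∀ v, Function.Injective (rk v))
    (hplu : ∀ j, pluFrac rk j < 1)
    (I : Finset (Fin m)) (hI : I.Nonempty) (hIne : I ≠ Finset.univ) :
    ∑ j ∈ Iᶜ, sSetFrac rk I j * (pluFrac rk j / (1 - pluFrac rk j)) ≤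
      1 - I.sup' hI (fun i => sTopFrac rk i I) := by
  have hn' : (0:ℝ) < n := by exact_mod_cast hn
  -- each voter has a unique top candidate
  have htop : ∀ v : Fin n, ∃! j : Fin m, (rk v j : ℕ) = 0 := by
    intro v
    obtain ⟨j0, hj0⟩ := (Finite.injective_iff_surjective.mp (hrk v)) ⟨0, hm⟩
    refine ⟨j0, by simp [hj0], ?_⟩
    intro j hj
    apply hrk v
    rw [hj0]
    exact Fin.ext (by simpa using hj)
  -- sum of pluFrac over all candidates is 1
  have hcount : ∑ j : Fin m, (Finset.univ.filter fun v => (rk v j : ℕ) = 0).card = n := by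
    simp_rw [Finset.card_filter]
    rw [Finset.sum_comm]
    have h1 : ∀ v : Fin n, (∑ j : Fin m, if (rk v j : ℕ) = 0 then 1 else 0) = 1 := by
      intro v
      rw [← Finset.card_filter]
      obtain ⟨j0, hj0, huniq⟩ := htop v
      rw [Finset.card_eq_one]
      exact ⟨j0, Finset.eq_singleton_iff_unique_mem.mpr
        ⟨by simpa using hj0, fun j hj => huniq j (by simpa using hj)⟩⟩
    simp [h1]
  have hsum : ∑ j : Fin m, pluFrac rk j = 1 := by
    unfold pluFrac
    rw [← Finset.sum_div]
    rw [div_eq_one_iff_eq (ne_of_gt hn')]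
    exact_mod_cast hcount
  -- nonnegativity facts
  have hplu0 : ∀ j, 0 ≤ pluFrac rk j := fun j => by
    unfold pluFrac; positivity
  -- pointwise bound on each term of the LHS
  have hterm : ∀ j ∈ Iᶜ,
      sSetFrac rk I j * (pluFrac rk j / (1 - pluFrac rk j)) ≤ pluFrac rk j := by
    intro j hj
    have hdisj : sSetFrac rk I j ≤ 1 - pluFrac rk j := by
      have hcard : (Finset.univ.filter fun v => ∀ i ∈ I, rk v i < rk v j).card +
          (Finset.univ.filter fun v => (rk v j : ℕ) = 0).card ≤ n := by
        rw [← Finset.card_union_of_disjoint]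
        · simpa using Finset.card_le_card
            (Finset.subset_univ ((Finset.univ.filter fun v => ∀ i ∈ I, rk v i < rk v j) ∪
              (Finset.univ.filter fun v => (rk v j : ℕ) = 0)))
        · rw [Finset.disjoint_left]
          intro v hv1 hv2
          simp only [Finset.mem_filter, Finset.mem_univ, true_and] at hv1 hv2
          obtain ⟨i0, hi0⟩ := hI
          have := hv1 i0 hi0
          rw [Fin.lt_def, hv2] at this
          omega
      unfold sSetFrac pluFrac
      have hc : ((Finset.univ.filter fun v => ∀ i ∈ I, rk v i < rk v j).card : ℝ) +
          ((Finset.univ.filter fun v => (rk v j : ℕ) = 0).card : ℝ) ≤ n := by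
        exact_mod_cast hcard
      rw [div_le_iff₀ hn']
      have h3 : ((Finset.univ.filter fun v => (rk v j : ℕ) = 0).card : ℝ) / n * n =
          ((Finset.univ.filter fun v => (rk v j : ℕ) = 0).card : ℝ) :=
        div_mul_cancel₀ _ (ne_of_gt hn')
      nlinarith [hc, h3]
    have hpos : 0 < 1 - pluFrac rk j := by linarith [hplu j]
    calc sSetFrac rk I j * (pluFrac rk j / (1 - pluFrac rk j))
        ≤ (1 - pluFrac rk j) * (pluFrac rk j / (1 - pluFrac rk j)) :=
          mul_le_mul_of_nonneg_right hdisj (div_nonneg (hplu0 j) hpos.le)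
      _ = pluFrac rk j := by field_simp
  -- each sTopFrac is at most the total plurality mass of I
  have hstop : ∀ i ∈ I, sTopFrac rk i I ≤ ∑ i' ∈ I, pluFrac rk i' := by
    intro i hi
    have hsub : (Finset.univ.filter fun v => ∀ j ∈ Iᶜ, rk v i < rk v j) ⊆
        I.biUnion (fun i' => Finset.univ.filter fun v => (rk v i' : ℕ) = 0) := by
      intro v hv
      simp only [Finset.mem_filter, Finset.mem_univ, true_and] at hv
      obtain ⟨j0, hj0, _⟩ := htop v
      have hj0I : j0 ∈ I := by
        by_contra hc
        have := hv j0 (Finset.mem_compl.mpr hc)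
        rw [Fin.lt_def, hj0] at this
        omega
      exact Finset.mem_biUnion.mpr ⟨j0, hj0I, by simpa using hj0⟩
    have hcard : (Finset.univ.filter fun v => ∀ j ∈ Iᶜ, rk v i < rk v j).card ≤
        ∑ i' ∈ I, (Finset.univ.filter fun v => (rk v i' : ℕ) = 0).card :=
      le_trans (Finset.card_le_card hsub) (Finset.card_biUnion_le)
    unfold sTopFrac pluFrac
    rw [← Finset.sum_div, div_le_div_iff_of_pos_right hn']
    exact_mod_cast hcard
  -- assemble
  have hsplit : ∑ i' ∈ I, pluFrac rk i' + ∑ j ∈ Iᶜ, pluFrac rk j = 1 := by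
    rw [Finset.sum_add_sum_compl]; exact hsum
  have hsup : I.sup' hI (fun i => sTopFrac rk i I) ≤ ∑ i' ∈ I, pluFrac rk i' :=
    Finset.sup'_le hI _ hstop
  calc ∑ j ∈ Iᶜ, sSetFrac rk I j * (pluFrac rk j / (1 - pluFrac rk j))
      ≤ ∑ j ∈ Iᶜ, pluFrac rk j := Finset.sum_le_sum hterm
    _ ≤ 1 - I.sup' hI (fun i => sTopFrac rk i I) := by linarith
end

section
/- Fix an election on m candidates and n voters, and suppose p ∈ ℝᵐ has nonnegative entries, β := ∑_{i=1}^m p_i > 0, and for every nonempty proper subset I of the candidate set, ∑_{j ∉ I} s_{I≻j}·p_j ≤ 1 − max_{i ∈ I} s_{i≻I^c}. Then for every metric d consistent with the election, ∑_{i=1}^m p_i·SC(i,d) ≤ (β + 2)·min_{j} SC(j,d). (Equivalently, the mechanism choosing candidate i with probability p_i/β has distortion at most 1 + 2/β on this election.) -/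
/-- The social cost of candidate `i` under the metric `d`: the average distance to voters. -/
noncomputable def socialCost {n m : ℕ} (d : Fin m → Fin n → ℝ) (i : Fin m) : ℝ :=
  (∑ v, d i v) / n

/-- If a nonnegative vector `p` with `β = ∑ p_i > 0` satisfies the biased-metric LP
constraints `∑_{j ∉ I} s_{I≻j} p_j ≤ 1 - max_{i ∈ I} s_{i≻Iᶜ}` for every nonempty proper
subset `I`, then for every metric `d` consistent with the election,
`∑ i, p i · SC(i,d) ≤ (β + 2) · min_j SC(j,d)`; i.e. the mechanism choosing `i` with
probability `p_i / β` has distortion at most `1 + 2/β` on this election. -/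
theorem lp2_implies_distortion
    (m n : ℕ) (hm : 0 < m) (hn : 0 < n)
    (rk : Fin n → Fin m → Fin m) (hrk : ∀ v, Function.Injective (rk v))
    (p : Fin m → ℝ) (hp : ∀ i, 0 ≤ p i)
    (β : ℝ) (hβ : β = ∑ i, p i) (hβpos : 0 < β)
    (hLP : ∀ I : Finset (Fin m), ∀ hI : I.Nonempty, I ≠ Finset.univ →
      ∑ j ∈ Iᶜ, sSetFrac rk I j * p j ≤ 1 - I.sup' hI (fun i => sTopFrac rk i I))
    (d : Fin m → Fin n → ℝ)
    (hd0 : ∀ i v, 0 ≤ d i v)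
    (hdc : ∀ (v : Fin n) (i j : Fin m), rk v i < rk v j → d i v ≤ d j v)
    (hdt : ∀ (j k : Fin m) (u v : Fin n), d j v ≤ d j u + d k u + d k v) :
    ∑ i, p i * socialCost d i ≤
      (β + 2) * Finset.univ.inf'
        (Finset.univ_nonempty_iff.mpr (Fin.pos_iff_nonempty.mp hm))
        (fun j => socialCost d j) := by
  classical
  have hnR : (0:ℝ) < (n:ℝ) := by exact_mod_cast hn
  have hnne : (Finset.univ : Finset (Fin n)).Nonempty :=
    Finset.univ_nonempty_iff.mpr (Fin.pos_iff_nonempty.mp hn)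
  obtain ⟨o, -, hoEq⟩ := Finset.exists_mem_eq_inf'
    (Finset.univ_nonempty_iff.mpr (Fin.pos_iff_nonempty.mp hm)) (fun j => socialCost d j)
  rw [hoEq]
  -- basic consequence of consistency
  have hA0 : ∀ (v : Fin n) (j c : Fin m), rk v j ≤ rk v c → d j v ≤ d c v := by
    intro v j c h
    rcases h.lt_or_eq with hlt | he
    · exact hdc v j c hlt
    · rw [hrk v he]
  -- the candidate "heights"
  set y : Fin m → ℝ := fun k =>
    if k = o then 0 else Finset.univ.inf' hnne (fun u => d k u + d o u) with hy
  have hyo : y o = 0 := by simp [hy]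
  have hy_nonneg : ∀ k, 0 ≤ y k := by
    intro k
    by_cases hk : k = o
    · simp [hy, hk]
    · simp only [hy, if_neg hk]
      exact Finset.le_inf' _ _ fun u _ => add_nonneg (hd0 _ _) (hd0 _ _)
  have hycore : ∀ (v : Fin n) (c : Fin m), d c v ≤ y c + d o v := by
    intro v c
    by_cases hc : c = o
    · subst hc; rw [hyo]; linarith
    · have h1 : d c v - d o v ≤ Finset.univ.inf' hnne (fun u => d c u + d o u) := by
        refine Finset.le_inf' _ _ fun u _ => ?_
        have := hdt c o u v
        linarith
      simp only [hy, if_neg hc]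
      linarith
  have hyB : ∀ (v : Fin n) (k : Fin m), rk v k ≤ rk v o → y k ≤ 2 * d o v := by
    intro v k h
    by_cases hk : k = o
    · rw [hk, hyo]; have := hd0 o v; linarith
    · have h1 : y k ≤ d k v + d o v := by
        simp only [hy, if_neg hk]
        exact Finset.inf'_le _ (Finset.mem_univ v)
      have h2 := hA0 v k o h
      linarith
  -- sort candidates by height
  set σ : Equiv.Perm (Fin m) := Tuple.sort y with hσdef
  have hmono : Monotone (y ∘ σ) := by rw [hσdef]; exact Tuple.monotone_sort y
  have hm1 : m - 1 < m := by omega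
  set F : ℕ → Fin m := fun k => σ ⟨min k (m-1), lt_of_le_of_lt (min_le_right _ _) hm1⟩
    with hFdef
  set G : ℕ → ℝ := fun k => y (F k) with hGdef
  have hFeq : ∀ c : Fin m, F ((σ.symm c : ℕ)) = c := by
    intro c
    have h1 : min ((σ.symm c : ℕ)) (m-1) = ((σ.symm c : ℕ)) :=
      Nat.min_eq_left (by have := (σ.symm c).isLt; omega)
    have h2 : (⟨min ((σ.symm c : ℕ)) (m-1),
        lt_of_le_of_lt (min_le_right _ _) hm1⟩ : Fin m) = σ.symm c :=
      Fin.ext (by simpa using h1)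
    simp only [hFdef]
    rw [h2, Equiv.apply_symm_apply]
  have hGmono : ∀ a b : ℕ, a ≤ b → G a ≤ G b := by
    intro a b hab
    simp only [hGdef, hFdef]
    exact hmono (by simp only [Fin.mk_le_mk]; omega)
  have hG_nonneg : ∀ k, 0 ≤ G k := fun k => hy_nonneg _
  have hGo : G ((σ.symm o : ℕ)) = 0 := by
    simp only [hGdef]; rw [hFeq]; exact hyo
  have hG0 : G 0 = 0 := by
    refine le_antisymm ?_ (hG_nonneg 0)
    have := hGmono 0 _ (Nat.zero_le ((σ.symm o : ℕ)))
    rw [hGo] at this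
    exact this
  set lam : ℕ → ℝ := fun k => G (k+1) - G k with hlamdef
  have hlam_nonneg : ∀ k, 0 ≤ lam k := fun k => sub_nonneg.mpr (hGmono k (k+1) (Nat.le_succ k))
  have htele : ∀ r : ℕ, r ≤ m - 1 →
      (∑ k ∈ Finset.range (m-1), if k < r then lam k else 0) = G r := by
    intro r hr
    rw [← Finset.sum_filter]
    have hfil : (Finset.range (m-1)).filter (fun k => k < r) = Finset.range r := by
      ext k; simp only [Finset.mem_filter, Finset.mem_range]; omega
    rw [hfil]
    have h2 : ∑ k ∈ Finset.range r, lam k = G r - G 0 := by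
      simp only [hlamdef]
      exact Finset.sum_range_sub (fun k => G k) r
    rw [h2, hG0, sub_zero]
  -- prefix sets
  set J : ℕ → Finset (Fin m) := fun t => Finset.univ.filter fun i => (σ.symm i : ℕ) < t
    with hJdef
  have hJmem : ∀ t (i : Fin m), i ∈ J t ↔ (σ.symm i : ℕ) < t := by
    intro t i; simp [hJdef]
  have hJne : ∀ k : ℕ, (J (k+1)).Nonempty := by
    intro k
    refine ⟨σ ⟨0, hm⟩, ?_⟩
    rw [hJmem]
    simp [Equiv.symm_apply_apply]
  have ho_in : ∀ k : ℕ, lam k ≠ 0 → o ∈ J (k+1) := by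
    intro k hl
    rw [hJmem]
    by_contra hcon
    push_neg at hcon
    have h1 : G (k+1) ≤ G ((σ.symm o : ℕ)) := hGmono _ _ hcon
    rw [hGo] at h1
    have h2 := hG_nonneg k
    have h3 : lam k ≤ 0 := by simp only [hlamdef]; linarith
    exact hl (le_antisymm h3 (hlam_nonneg k))
  -- per-voter upper bound on d j v
  have hA : ∀ (v : Fin n) (j : Fin m),
      d j v ≤ d o v + ∑ k ∈ Finset.range (m-1),
        lam k * (if ∀ i ∈ J (k+1), rk v i < rk v j then (1:ℝ) else 0) := by
    intro v j
    set S : Finset (Fin m) := Finset.univ.filter (fun c => rk v j ≤ rk v c) with hSdef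
    have hjmem : j ∈ S := by rw [hSdef]; simp
    have hSne : S.Nonempty := ⟨j, hjmem⟩
    obtain ⟨c, hcmem, hc⟩ := Finset.exists_mem_eq_inf' hSne (fun c => ((σ.symm c : ℕ)))
    have hcS : rk v j ≤ rk v c := by
      have := hcmem; rw [hSdef] at this; simpa using this
    have hρle : S.inf' hSne (fun c => ((σ.symm c : ℕ))) ≤ m - 1 := by
      rw [hc]; have := (σ.symm c).isLt; omega
    have hiff : ∀ k : ℕ, (∀ i ∈ J (k+1), rk v i < rk v j) ↔
        k < S.inf' hSne (fun c => ((σ.symm c : ℕ))) := by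
      intro k
      constructor
      · intro h
        by_contra hk
        push_neg at hk
        have hcJ : c ∈ J (k+1) := by rw [hJmem]; omega
        exact absurd (h c hcJ) (not_lt.mpr hcS)
      · intro hk i hi
        by_contra hri
        push_neg at hri
        have hiS : i ∈ S := by rw [hSdef]; simp [hri]
        have h5 : S.inf' hSne (fun c => ((σ.symm c : ℕ))) ≤ (σ.symm i : ℕ) :=
          Finset.inf'_le _ hiS
        rw [hJmem] at hi
        omega
    have hsum : (∑ k ∈ Finset.range (m-1),
        lam k * (if ∀ i ∈ J (k+1), rk v i < rk v j then (1:ℝ) else 0))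
        = G (S.inf' hSne (fun c => ((σ.symm c : ℕ)))) := by
      rw [← htele _ hρle]
      refine Finset.sum_congr rfl fun k _ => ?_
      by_cases h : k < S.inf' hSne (fun c => ((σ.symm c : ℕ)))
      · rw [if_pos ((hiff k).mpr h), if_pos h, mul_one]
      · rw [if_neg (fun hh => h ((hiff k).mp hh)), if_neg h, mul_zero]
    have hGc : G (S.inf' hSne (fun c => ((σ.symm c : ℕ)))) = y c := by
      rw [hc]; simp only [hGdef]; rw [hFeq]
    rw [hsum, hGc]
    have h6 := hA0 v j c hcS
    have h7 := hycore v c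
    linarith
  -- per-voter lower bound on d o v
  have hB : ∀ v : Fin n,
      (∑ k ∈ Finset.range (m-1),
        lam k * (if ¬ (∀ i ∈ (J (k+1))ᶜ, rk v o < rk v i) then (1:ℝ) else 0))
        ≤ 2 * d o v := by
    intro v
    set T : Finset (Fin m) := Finset.univ.filter (fun t => rk v t ≤ rk v o) with hTdef
    have hone : o ∈ T := by rw [hTdef]; simp
    have hTne : T.Nonempty := ⟨o, hone⟩
    obtain ⟨t0, ht0mem, ht0⟩ := Finset.exists_mem_eq_sup' hTne (fun t => ((σ.symm t : ℕ)))
    have ht0S : rk v t0 ≤ rk v o := by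
      have := ht0mem; rw [hTdef] at this; simpa using this
    have hRle : T.sup' hTne (fun t => ((σ.symm t : ℕ))) ≤ m - 1 := by
      rw [ht0]; have := (σ.symm t0).isLt; omega
    have hiff : ∀ k : ℕ, (¬ (∀ i ∈ (J (k+1))ᶜ, rk v o < rk v i)) ↔
        k < T.sup' hTne (fun t => ((σ.symm t : ℕ))) := by
      intro k
      constructor
      · intro h
        push_neg at h
        obtain ⟨i, hi1, hi2⟩ := h
        rw [Finset.mem_compl, hJmem] at hi1
        have hiT : i ∈ T := by
          rw [hTdef]; exact Finset.mem_filter.mpr ⟨Finset.mem_univ _, hi2⟩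
        have h5 : (σ.symm i : ℕ) ≤ T.sup' hTne (fun t => ((σ.symm t : ℕ))) :=
          Finset.le_sup' (fun t => ((σ.symm t : ℕ))) hiT
        omega
      · intro hk hall
        have ht0J : t0 ∈ (J (k+1))ᶜ := by
          rw [Finset.mem_compl, hJmem]; omega
        exact absurd (hall t0 ht0J) (not_lt.mpr ht0S)
    have hsum : (∑ k ∈ Finset.range (m-1),
        lam k * (if ¬ (∀ i ∈ (J (k+1))ᶜ, rk v o < rk v i) then (1:ℝ) else 0))
        = G (T.sup' hTne (fun t => ((σ.symm t : ℕ)))) := by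
      rw [← htele _ hRle]
      refine Finset.sum_congr rfl fun k _ => ?_
      by_cases h : k < T.sup' hTne (fun t => ((σ.symm t : ℕ)))
      · rw [if_pos ((hiff k).mpr h), if_pos h, mul_one]
      · rw [if_neg (fun hh => h ((hiff k).mp hh)), if_neg h, mul_zero]
    rw [hsum]
    have hGt : G (T.sup' hTne (fun t => ((σ.symm t : ℕ)))) = y t0 := by
      rw [ht0]; simp only [hGdef]; rw [hFeq]
    rw [hGt]
    exact hyB v t0 ht0S
  -- aggregated upper bound on social costs
  have hSC : ∀ j, socialCost d j ≤ socialCost d o +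
      ∑ k ∈ Finset.range (m-1), lam k * sSetFrac rk (J (k+1)) j := by
    intro j
    have h1 : (∑ v, d j v) ≤ ∑ v, (d o v + ∑ k ∈ Finset.range (m-1),
        lam k * (if ∀ i ∈ J (k+1), rk v i < rk v j then (1:ℝ) else 0)) :=
      Finset.sum_le_sum fun v _ => hA v j
    have h2 : (∑ v, (d o v + ∑ k ∈ Finset.range (m-1),
        lam k * (if ∀ i ∈ J (k+1), rk v i < rk v j then (1:ℝ) else 0)))
        = (∑ v, d o v) + ∑ k ∈ Finset.range (m-1),
          lam k * ((Finset.univ.filter fun v => ∀ i ∈ J (k+1), rk v i < rk v j).card : ℝ) := by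
      rw [Finset.sum_add_distrib]
      congr 1
      rw [Finset.sum_comm]
      refine Finset.sum_congr rfl fun k _ => ?_
      rw [← Finset.mul_sum, Finset.sum_boole]
    have h3 : socialCost d o + ∑ k ∈ Finset.range (m-1), lam k * sSetFrac rk (J (k+1)) j
        = ((∑ v, d o v) + ∑ k ∈ Finset.range (m-1),
            lam k * ((Finset.univ.filter fun v => ∀ i ∈ J (k+1), rk v i < rk v j).card : ℝ)) / n := by
      rw [add_div, socialCost]
      congr 1
      rw [Finset.sum_div]
      refine Finset.sum_congr rfl fun k _ => ?_
      rw [sSetFrac, mul_div_assoc]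
    rw [socialCost, h3, ← h2]
    exact div_le_div_of_nonneg_right h1 hnR.le
  -- the LP bound per prefix set
  set Mk : ℕ → ℝ := fun k =>
    if h : (J (k+1)).Nonempty then (J (k+1)).sup' h (fun i => sTopFrac rk i (J (k+1))) else 0
    with hMkdef
  have hstep3 : ∀ k ∈ Finset.range (m-1),
      (∑ j, p j * sSetFrac rk (J (k+1)) j) ≤ 1 - Mk k := by
    intro k hk
    have hne : (J (k+1)).Nonempty := hJne k
    have hzero : ∀ j ∈ J (k+1), p j * sSetFrac rk (J (k+1)) j = 0 := by
      intro j hj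
      have hempty : (Finset.univ.filter fun v => ∀ i ∈ J (k+1), rk v i < rk v j) = ∅ := by
        rw [Finset.filter_eq_empty_iff]
        intro v _
        exact fun hcon => absurd (hcon j hj) (lt_irrefl _)
      rw [sSetFrac, hempty]
      simp
    have hsplit : (∑ j, p j * sSetFrac rk (J (k+1)) j)
        = ∑ j ∈ (J (k+1))ᶜ, sSetFrac rk (J (k+1)) j * p j := by
      rw [← Finset.sum_compl_add_sum (J (k+1)) (fun j => p j * sSetFrac rk (J (k+1)) j)]
      rw [Finset.sum_eq_zero hzero, add_zero]
      exact Finset.sum_congr rfl fun j _ => mul_comm _ _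
    have hproper : J (k+1) ≠ Finset.univ := by
      simp only [Finset.mem_range] at hk
      intro hcon
      have h9 : σ ⟨m-1, hm1⟩ ∈ J (k+1) := by rw [hcon]; exact Finset.mem_univ _
      rw [hJmem] at h9
      simp only [Equiv.symm_apply_apply] at h9
      omega
    have hlp := hLP (J (k+1)) hne hproper
    have hMkeq : Mk k = (J (k+1)).sup' hne (fun i => sTopFrac rk i (J (k+1))) := by
      simp only [hMkdef, dif_pos hne]
    rw [hsplit, hMkeq]
    exact hlp
  -- the LP right-hand sides are dominated by 2 * SC(o)
  have hstep4 : (∑ k ∈ Finset.range (m-1), lam k * (1 - Mk k)) ≤ 2 * socialCost d o := by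
    have hQ : ∀ k ∈ Finset.range (m-1), lam k * (1 - Mk k) ≤
        lam k * ((∑ v, (if ¬ (∀ i ∈ (J (k+1))ᶜ, rk v o < rk v i) then (1:ℝ) else 0)) / n) := by
      intro k hk
      by_cases hl : lam k = 0
      · rw [hl]; simp
      · have honem : o ∈ J (k+1) := ho_in k hl
        have hne : (J (k+1)).Nonempty := ⟨o, honem⟩
        refine mul_le_mul_of_nonneg_left ?_ (hlam_nonneg k)
        have hMkeq : Mk k = (J (k+1)).sup' hne (fun i => sTopFrac rk i (J (k+1))) := by
          simp only [hMkdef, dif_pos hne]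
        have hle : sTopFrac rk o (J (k+1)) ≤ Mk k := by
          rw [hMkeq]
          exact Finset.le_sup' (fun i => sTopFrac rk i (J (k+1))) honem
        have hcnt : ((Finset.univ.filter fun v => ∀ i ∈ (J (k+1))ᶜ, rk v o < rk v i).card)
            + ((Finset.univ.filter fun v => ¬ ∀ i ∈ (J (k+1))ᶜ, rk v o < rk v i).card) = n := by
          rw [Finset.card_filter_add_card_filter_not]
          simp
        have hcards : (∑ v, (if ¬ (∀ i ∈ (J (k+1))ᶜ, rk v o < rk v i) then (1:ℝ) else 0))
            = (n : ℝ) - ((Finset.univ.filter fun v => ∀ i ∈ (J (k+1))ᶜ, rk v o < rk v i).card : ℝ) := by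
          rw [Finset.sum_boole]
          have hcntR : ((Finset.univ.filter fun v => ∀ i ∈ (J (k+1))ᶜ, rk v o < rk v i).card : ℝ)
              + ((Finset.univ.filter fun v => ¬ ∀ i ∈ (J (k+1))ᶜ, rk v o < rk v i).card : ℝ)
              = (n : ℝ) := by exact_mod_cast hcnt
          linarith
        rw [hcards]
        have hstf : sTopFrac rk o (J (k+1))
            = ((Finset.univ.filter fun v => ∀ i ∈ (J (k+1))ᶜ, rk v o < rk v i).card : ℝ) / n := rfl
        rw [sub_div, div_self (ne_of_gt hnR)]
        rw [hstf] at hle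
        linarith
    calc (∑ k ∈ Finset.range (m-1), lam k * (1 - Mk k))
        ≤ ∑ k ∈ Finset.range (m-1), lam k *
            ((∑ v, (if ¬ (∀ i ∈ (J (k+1))ᶜ, rk v o < rk v i) then (1:ℝ) else 0)) / n) :=
          Finset.sum_le_sum hQ
      _ = (∑ v, ∑ k ∈ Finset.range (m-1),
            lam k * (if ¬ (∀ i ∈ (J (k+1))ᶜ, rk v o < rk v i) then (1:ℝ) else 0)) / n := by
          have e1 : ∀ k, lam k *
              ((∑ v, (if ¬ (∀ i ∈ (J (k+1))ᶜ, rk v o < rk v i) then (1:ℝ) else 0)) / n)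
              = (∑ v, lam k * (if ¬ (∀ i ∈ (J (k+1))ᶜ, rk v o < rk v i) then (1:ℝ) else 0)) / n := by
            intro k
            rw [← mul_div_assoc, Finset.mul_sum]
          rw [Finset.sum_congr rfl fun k _ => e1 k, ← Finset.sum_div]
          exact congrArg (fun z => z / (n:ℝ)) Finset.sum_comm
      _ ≤ (∑ v, 2 * d o v) / n := by
          refine div_le_div_of_nonneg_right ?_ hnR.le
          exact Finset.sum_le_sum fun v _ => hB v
      _ = 2 * socialCost d o := by
          rw [socialCost, ← Finset.mul_sum, mul_div_assoc]
  -- put everything together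
  have hfinal : ∑ i, p i * socialCost d i ≤ β * socialCost d o +
      ∑ k ∈ Finset.range (m-1), lam k * (1 - Mk k) := by
    calc ∑ i, p i * socialCost d i
        ≤ ∑ i, p i * (socialCost d o +
            ∑ k ∈ Finset.range (m-1), lam k * sSetFrac rk (J (k+1)) i) :=
          Finset.sum_le_sum fun i _ => mul_le_mul_of_nonneg_left (hSC i) (hp i)
      _ = β * socialCost d o + ∑ k ∈ Finset.range (m-1),
            lam k * ∑ i, p i * sSetFrac rk (J (k+1)) i := by
          simp only [mul_add, Finset.sum_add_distrib]
          congr 1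
          · rw [← Finset.sum_mul, hβ]
          · simp only [Finset.mul_sum]
            rw [Finset.sum_comm]
            refine Finset.sum_congr rfl fun k _ => ?_
            refine Finset.sum_congr rfl fun i _ => ?_
            ring
      _ ≤ β * socialCost d o + ∑ k ∈ Finset.range (m-1), lam k * (1 - Mk k) := by
          refine add_le_add_right (Finset.sum_le_sum fun k hk => ?_) _
          exact mul_le_mul_of_nonneg_left (hstep3 k hk) (hlam_nonneg k)
  have hSCo_nonneg : 0 ≤ socialCost d o := by
    rw [socialCost]
    exact div_nonneg (Finset.sum_nonneg fun v _ => hd0 o v) (le_of_lt hnR)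
  linarith [hstep4, hfinal]
end

section
/- Fix an election on m candidates and n voters and a real number β > 0. The following are equivalent: (i) there exists p ∈ ℝᵐ with nonnegative entries and ∑_i p_i = β such that for every metric d consistent with the election, ∑_{i=1}^m (SC(i,d) − min_j SC(j,d))·p_i ≤ min_j SC(j,d); (ii) there exists q ∈ ℝᵐ with nonnegative entries and ∑_i q_i = 1 such that for every metric d consistent with the election, ∑_{i=1}^m q_i·SC(i,d) ≤ (1 + 1/β)·min_j SC(j,d). (That is, the optimal objective of the distortion LP being β corresponds exactly to an optimal voting mechanism attaining distortion 1 + 1/β on this election.) -/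
/-- Equivalence between the distortion LP having objective value `β` and the existence of a
randomized mechanism with distortion `1 + 1/β`: (i) there is a nonnegative `p` with
`∑ p_i = β` such that for every consistent metric `d`,
`∑ i, (SC(i,d) - min_j SC(j,d)) p_i ≤ min_j SC(j,d)`, iff (ii) there is a probability vector
`q` such that for every consistent metric `d`, `∑ i, q_i SC(i,d) ≤ (1 + 1/β) min_j SC(j,d)`. -/
theorem lp_distortion_equivalence
    (m n : ℕ) (hm : 0 < m) (hn : 0 < n)
    (rk : Fin n → Fin m → Fin m) (hrk : ∀ v, Function.Injective (rk v))
    (β : ℝ) (hβ : 0 < β) :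
    (∃ p : Fin m → ℝ, (∀ i, 0 ≤ p i) ∧ ∑ i, p i = β ∧
      ∀ d : Fin m → Fin n → ℝ, (∀ i v, 0 ≤ d i v) →
        (∀ (v : Fin n) (i j : Fin m), rk v i < rk v j → d i v ≤ d j v) →
        (∀ (j k : Fin m) (u v : Fin n), d j v ≤ d j u + d k u + d k v) →
        ∑ i, (socialCost d i -
            Finset.univ.inf' (Finset.univ_nonempty_iff.mpr (Fin.pos_iff_nonempty.mp hm))
              (fun j => socialCost d j)) * p i ≤
          Finset.univ.inf' (Finset.univ_nonempty_iff.mpr (Fin.pos_iff_nonempty.mp hm))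
            (fun j => socialCost d j)) ↔
    (∃ q : Fin m → ℝ, (∀ i, 0 ≤ q i) ∧ ∑ i, q i = 1 ∧
      ∀ d : Fin m → Fin n → ℝ, (∀ i v, 0 ≤ d i v) →
        (∀ (v : Fin n) (i j : Fin m), rk v i < rk v j → d i v ≤ d j v) →
        (∀ (j k : Fin m) (u v : Fin n), d j v ≤ d j u + d k u + d k v) →
        ∑ i, q i * socialCost d i ≤
          (1 + 1 / β) *
            Finset.univ.inf' (Finset.univ_nonempty_iff.mpr (Fin.pos_iff_nonempty.mp hm))
              (fun j => socialCost d j)) := by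

  constructor
  · rintro ⟨p, hp0, hps, hp⟩
    refine ⟨fun i => p i / β, fun i => div_nonneg (hp0 i) hβ.le, ?_, ?_⟩
    · rw [← Finset.sum_div, hps, div_self hβ.ne']
    · intro d hd1 hd2 hd3
      have h := hp d hd1 hd2 hd3
      set M := Finset.univ.inf' (Finset.univ_nonempty_iff.mpr (Fin.pos_iff_nonempty.mp hm))
        (fun j => socialCost d j) with hM
      have key : ∑ i, socialCost d i * p i ≤ (1 + β) * M := by
        have : ∑ i, (socialCost d i - M) * p i
            = ∑ i, socialCost d i * p i - M * β := by
          rw [← hps, Finset.mul_sum, ← Finset.sum_sub_distrib]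
          congr 1; ext i; ring
        nlinarith [h]
      calc ∑ i, p i / β * socialCost d i = (∑ i, socialCost d i * p i) / β := by
            rw [Finset.sum_div]; congr 1; ext i; ring
        _ ≤ (1 + β) * M / β := (div_le_div_iff_of_pos_right hβ).mpr key
        _ = (1 + 1 / β) * M := by
            rw [div_eq_iff hβ.ne', one_div]
            linear_combination -M * inv_mul_cancel₀ hβ.ne'
  · rintro ⟨q, hq0, hqs, hq⟩
    refine ⟨fun i => β * q i, fun i => mul_nonneg hβ.le (hq0 i), ?_, ?_⟩
    · rw [← Finset.mul_sum, hqs, mul_one]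
    · intro d hd1 hd2 hd3
      have h := hq d hd1 hd2 hd3
      set M := Finset.univ.inf' (Finset.univ_nonempty_iff.mpr (Fin.pos_iff_nonempty.mp hm))
        (fun j => socialCost d j) with hM
      have hsum : ∑ i, (socialCost d i - M) * (β * q i)
          = β * (∑ i, q i * socialCost d i) - M * β := by
        rw [Finset.mul_sum]
        rw [show M * β = ∑ i, M * (β * q i) by
          rw [← Finset.mul_sum, ← Finset.mul_sum, hqs]; ring]
        rw [← Finset.sum_sub_distrib]
        congr 1; ext i; ring
      rw [hsum]
      have : β * (∑ i, q i * socialCost d i) ≤ β * ((1 + 1 / β) * M) :=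
        mul_le_mul_of_nonneg_left h hβ.le
      have hb : β * ((1 + 1 / β) * M) = β * M + M := by field_simp
      linarith
end

section
/- Let a, b ∈ (0,1) with a + b ≤ 1 and b(1 − b) ≤ 1 − a. Let M be the 3×3 matrix with rows (0, a, a), (1−a, 0, b), (1−a, 1−b, 0), and let plu = (a, b, 1−a−b). Then every p ∈ ℝ³ satisfying M·p ≤ 𝟏 − plu entrywise satisfies p₁ + p₂ + p₃ ≤ (−b(1−b) + (1−a))/a + ((1−b)² + b(a+b))/(1−a). -/
/-- Let `a, b ∈ (0,1)` with `a + b ≤ 1` and `b(1-b) ≤ 1-a`.  For the `3 × 3` comparisons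
matrix `M` with rows `(0,a,a)`, `(1-a,0,b)`, `(1-a,1-b,0)` and plurality vector
`plu = (a, b, 1-a-b)`, every `p` with `M ⬝ p ≤ 𝟏 - plu` entrywise satisfies
`p₁ + p₂ + p₃ ≤ (-b(1-b) + (1-a))/a + ((1-b)² + b(a+b))/(1-a)`. -/
theorem three_candidate_lp_bound
    (a b : ℝ) (ha0 : 0 < a) (ha1 : a < 1) (hb0 : 0 < b) (hb1 : b < 1)
    (hab : a + b ≤ 1) (hbb : b * (1 - b) ≤ 1 - a)
    (p : Fin 3 → ℝ)
    (hp : ∀ i, (!![0, a, a; 1 - a, 0, b; 1 - a, 1 - b, 0]).mulVec p i ≤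
      1 - ![a, b, 1 - a - b] i) :
    p 0 + p 1 + p 2 ≤
      (-(b * (1 - b)) + (1 - a)) / a + ((1 - b) ^ 2 + b * (a + b)) / (1 - a) := by
  have h0 := hp 0
  have h1 := hp 1
  have h2 := hp 2
  simp [Matrix.mulVec, dotProduct, Fin.sum_univ_three] at h0 h1 h2
  have ha1' : (0:ℝ) < 1 - a := by linarith
  rw [div_add_div _ _ ha0.ne' ha1'.ne', le_div_iff₀ (by positivity)]
  have H0 := mul_le_mul_of_nonneg_left h0 (show (0:ℝ) ≤ 1 - a - b * (1 - b) by linarith)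
  have H1 := mul_le_mul_of_nonneg_left h1 (show (0:ℝ) ≤ a * (1 - b) by nlinarith)
  have H2 := mul_le_mul_of_nonneg_left h2 (show (0:ℝ) ≤ a * b by positivity)
  nlinarith [H0, H1, H2]
end

section
/- Let a = 0.473356 and b = 0.423961. For all q₁, q₂, q₃ ≥ 0 with q₁ + q₂ + q₃ = 1, at least one of the following three inequalities holds: (1−a)q₁ + (1+a)q₂ + (1+a)q₃ ≥ 2.026·(1−a); (3−2a−b)q₁ + (1−b)q₂ + (1+b)q₃ ≥ 2.026·(1−b); (2−a+b)q₁ + (2+a−b)q₂ + (a+b)q₃ ≥ 2.026·(a+b). (Consequently, on the 3-candidate election with rankings (1,3,2), (2,3,1), (3,2,1) in proportions a, b, 1−a−b, every randomized mechanism incurs distortion at least 2.026 on one of the three (0,1,2,3)-metrics, so no randomized election mechanism on 3 candidates guarantees distortion less than 2.026.) -/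
/-- With `a = 0.473356` and `b = 0.423961`, for all nonnegative `q₁, q₂, q₃` summing
to `1`, at least one of the three inequalities holds:
`(1-a)q₁ + (1+a)q₂ + (1+a)q₃ ≥ 2.026(1-a)`,
`(3-2a-b)q₁ + (1-b)q₂ + (1+b)q₃ ≥ 2.026(1-b)`, or
`(2-a+b)q₁ + (2+a-b)q₂ + (a+b)q₃ ≥ 2.026(a+b)`.
Hence no randomized mechanism on 3 candidates guarantees distortion below `2.026`. -/
theorem three_candidate_lower_bound
    (q1 q2 q3 : ℝ) (h1 : 0 ≤ q1) (h2 : 0 ≤ q2) (h3 : 0 ≤ q3)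
    (hsum : q1 + q2 + q3 = 1) :
    2.026 * (1 - 0.473356) ≤
        (1 - 0.473356) * q1 + (1 + 0.473356) * q2 + (1 + 0.473356) * q3 ∨
    2.026 * (1 - 0.423961) ≤
        (3 - 2 * 0.473356 - 0.423961) * q1 + (1 - 0.423961) * q2 +
          (1 + 0.423961) * q3 ∨
    2.026 * (0.473356 + 0.423961) ≤
        (2 - 0.473356 + 0.423961) * q1 + (2 + 0.473356 - 0.423961) * q2 +
          (0.473356 + 0.423961) * q3 := by
  by_contra h
  push_neg at h
  obtain ⟨ha, hb, hc⟩ := h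
  linarith
end

section
/- Let a = 0.459994, b = 0.406749, c = 0.363254. Let M be the 4×4 matrix with rows (0, a, a, a), (1−a, 0, b, b), (1−a, 1−b, 0, c), (1−a, 1−b, 1−c, 0), and let plu = (a, b, 1−a−b, 0). Then every p ∈ ℝ⁴ satisfying M·p ≤ 𝟏 − plu entrywise satisfies p₁ + p₂ + p₃ + p₄ ≤ 1.906. (Consequently, no randomized election mechanism on 4 candidates can guarantee distortion less than 1 + 2/1.906 > 2.049.) -/
/-- With `a = 0.459994`, `b = 0.406749`, `c = 0.363254`, for the `4 × 4` comparisons matrix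
`M` with rows `(0,a,a,a)`, `(1-a,0,b,b)`, `(1-a,1-b,0,c)`, `(1-a,1-b,1-c,0)` and plurality
vector `plu = (a, b, 1-a-b, 0)`, every `p ∈ ℝ⁴` with `M ⬝ p ≤ 𝟏 - plu` entrywise satisfies
`p₁ + p₂ + p₃ + p₄ ≤ 1.906`.  (Consequently no randomized mechanism on 4 candidates can
guarantee distortion less than `1 + 2/1.906 > 2.049`.) -/
theorem four_candidate_lp_bound
    (p : Fin 4 → ℝ)
    (hp : ∀ i, (!![0, 0.459994, 0.459994, 0.459994;
        1 - 0.459994, 0, 0.406749, 0.406749;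
        1 - 0.459994, 1 - 0.406749, 0, 0.363254;
        1 - 0.459994, 1 - 0.406749, 1 - 0.363254, 0] : Matrix (Fin 4) (Fin 4) ℝ).mulVec p i ≤
      1 - ![(0.459994 : ℝ), 0.406749, 1 - 0.459994 - 0.406749, 0] i) :
    p 0 + p 1 + p 2 + p 3 ≤ 1.906 := by
  have h0 := hp 0
  have h1 := hp 1
  have h2 := hp 2
  have h3 := hp 3
  simp [Matrix.mulVec, dotProduct, Fin.sum_univ_four] at h0 h1 h2 h3
  norm_num at h0 h1 h2 h3
  linarith
end

section
/- Let a, b, c ∈ (0,1) with a + b ≤ 1, a + b + c ≥ 1, and a, b > 0. Consider the 4-candidate election whose voters have rankings (1,4,3,2), (1,3,4,2), (2,4,3,1), (2,3,4,1), (3,4,2,1) in proportions a·(1−c)/(a+b), a·(1 − (1−c)/(a+b)), b·(1−c)/(a+b), b·(1 − (1−c)/(a+b)), and 1−(a+b), respectively (all proportions are nonnegative). Then its comparisons matrix M has rows (0, a, a, a), (1−a, 0, b, b), (1−a, 1−b, 0, c), (1−a, 1−b, 1−c, 0), and its plurality vector is plu = (a, b, 1−a−b, 0). -/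
/-- Fraction of the voters whose ranking is exactly `σ`, where `σ c` is the position
of candidate `c` (`0` = most preferred). -/
noncomputable def rankFrac {n m : ℕ} (rk : Fin n → Fin m → Fin m) (σ : Fin m → Fin m) : ℝ :=
  ((Finset.univ.filter fun v => rk v = σ).card : ℝ) / n

def elSigmas : Fin 5 → Fin 4 → Fin 4 :=
  ![![0,3,2,1], ![0,3,1,2], ![3,0,2,1], ![3,0,1,2], ![3,2,0,1]]

lemma elSigmas_inj : ∀ i j : Fin 5, elSigmas i = elSigmas j → i = j := by decide

lemma el_key {n : ℕ} (rk : Fin n → Fin 4 → Fin 4)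
    (hcov : ∀ v, ∃ k, rk v = elSigmas k)
    (P : (Fin 4 → Fin 4) → Prop) [DecidablePred P] :
    ((Finset.univ.filter fun v => P (rk v)).card : ℝ) / n
      = ∑ k, if P (elSigmas k) then rankFrac rk (elSigmas k) else 0 := by
  classical
  have hset : (Finset.univ.filter fun v => P (rk v))
      = Finset.univ.biUnion (fun k =>
          Finset.univ.filter fun v => P (elSigmas k) ∧ rk v = elSigmas k) := by
    ext v
    simp only [Finset.mem_filter, Finset.mem_biUnion, Finset.mem_univ, true_and]
    constructor
    · intro hP
      obtain ⟨k, hk⟩ := hcov v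
      exact ⟨k, by rw [← hk]; exact hP, hk⟩
    · rintro ⟨k, hPk, hk⟩
      rw [hk]; exact hPk
  have hdisj : ∀ i ∈ Finset.univ, ∀ j ∈ Finset.univ, i ≠ j →
      Disjoint (Finset.univ.filter fun v => P (elSigmas i) ∧ rk v = elSigmas i)
        (Finset.univ.filter fun v => P (elSigmas j) ∧ rk v = elSigmas j) := by
    intro i _ j _ hij
    refine Finset.disjoint_left.2 ?_
    intro v hv hv'
    simp only [Finset.mem_filter, Finset.mem_univ, true_and] at hv hv'
    exact hij (elSigmas_inj i j (hv.2 ▸ hv'.2))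
  rw [hset, Finset.card_biUnion hdisj]
  push_cast
  rw [Finset.sum_div]
  refine Finset.sum_congr rfl fun k _ => ?_
  by_cases hPk : P (elSigmas k)
  · simp only [hPk, if_true, rankFrac, true_and]
  · have : (Finset.univ.filter fun v => P (elSigmas k) ∧ rk v = elSigmas k) = ∅ := by
      ext v; simp [hPk]
    simp [hPk, this]

/-- Let `a, b, c ∈ (0,1)` with `a + b ≤ 1` and `a + b + c ≥ 1`.  In the 4-candidate election
whose voters have rankings `(1,4,3,2)`, `(1,3,4,2)`, `(2,4,3,1)`, `(2,3,4,1)`, `(3,4,2,1)`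
in proportions `a(1-c)/(a+b)`, `a(1 - (1-c)/(a+b))`, `b(1-c)/(a+b)`, `b(1 - (1-c)/(a+b))`,
`1-(a+b)` respectively, the comparisons matrix is
`(0,a,a,a; 1-a,0,b,b; 1-a,1-b,0,c; 1-a,1-b,1-c,0)` and the plurality vector is
`(a, b, 1-a-b, 0)`.  (Candidates `1,2,3,4` are indexed by `0,1,2,3`, and a ranking is
recorded by the position of each candidate.) -/
theorem four_candidate_election_realizes
    (n : ℕ) (hn : 0 < n)
    (a b c : ℝ) (ha0 : 0 < a) (ha1 : a < 1) (hb0 : 0 < b) (hb1 : b < 1)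
    (hc0 : 0 < c) (hc1 : c < 1) (hab : a + b ≤ 1) (habc : 1 ≤ a + b + c)
    (rk : Fin n → Fin 4 → Fin 4) (hrk : ∀ v, Function.Injective (rk v))
    (h1 : rankFrac rk ![0, 3, 2, 1] = a * ((1 - c) / (a + b)))
    (h2 : rankFrac rk ![0, 3, 1, 2] = a * (1 - (1 - c) / (a + b)))
    (h3 : rankFrac rk ![3, 0, 2, 1] = b * ((1 - c) / (a + b)))
    (h4 : rankFrac rk ![3, 0, 1, 2] = b * (1 - (1 - c) / (a + b)))
    (h5 : rankFrac rk ![3, 2, 0, 1] = 1 - (a + b)) :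
    (Matrix.of fun i j => sFrac rk i j) =
      !![0, a, a, a;
         1 - a, 0, b, b;
         1 - a, 1 - b, 0, c;
         1 - a, 1 - b, 1 - c, 0] ∧
    pluFrac rk = ![a, b, 1 - a - b, 0] := by
  classical
  have hn' : (n : ℝ) ≠ 0 := Nat.cast_ne_zero.2 hn.ne'
  have hsum1 : ∑ k, rankFrac rk (elSigmas k) = 1 := by
    rw [Fin.sum_univ_five]
    show rankFrac rk ![0,3,2,1] + rankFrac rk ![0,3,1,2] + rankFrac rk ![3,0,2,1]
        + rankFrac rk ![3,0,1,2] + rankFrac rk ![3,2,0,1] = 1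
    rw [h1, h2, h3, h4, h5]; ring
  have hcards : ∑ k : Fin 5,
      ((Finset.univ.filter fun v => rk v = elSigmas k).card : ℝ) = n := by
    have := hsum1
    simp only [rankFrac] at this
    rw [← Finset.sum_div] at this
    field_simp at this
    linarith [this]
  have hcardn : (Finset.univ.biUnion (fun k : Fin 5 =>
      Finset.univ.filter fun v => rk v = elSigmas k)).card = n := by
    rw [Finset.card_biUnion]
    · have h : ((∑ k : Fin 5,
        (Finset.univ.filter fun v => rk v = elSigmas k).card : ℕ) : ℝ) = (n : ℝ) := by
        push_cast; linarith [hcards]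
      exact_mod_cast h
    · intro i _ j _ hij
      refine Finset.disjoint_left.2 ?_
      intro v hv hv'
      simp only [Finset.mem_filter, Finset.mem_univ, true_and] at hv hv'
      exact hij (elSigmas_inj i j (hv ▸ hv'))
  have hcov : ∀ v, ∃ k, rk v = elSigmas k := by
    intro v
    have huniv : (Finset.univ.biUnion (fun k : Fin 5 =>
        Finset.univ.filter fun v => rk v = elSigmas k)) = Finset.univ := by
      apply Finset.eq_univ_of_card
      rw [hcardn, Fintype.card_fin]
    have hv : v ∈ Finset.univ.biUnion (fun k : Fin 5 =>
        Finset.univ.filter fun v => rk v = elSigmas k) := by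
      rw [huniv]; exact Finset.mem_univ v
    simp only [Finset.mem_biUnion, Finset.mem_filter, Finset.mem_univ, true_and] at hv
    exact hv
  have key := el_key rk hcov
  have hs : ∀ i j : Fin 4, sFrac rk i j
      = ∑ k, if elSigmas k i < elSigmas k j then rankFrac rk (elSigmas k) else 0 :=
    fun i j => key (fun σ => σ i < σ j)
  have hp : ∀ i : Fin 4, pluFrac rk i
      = ∑ k, if (elSigmas k i : ℕ) = 0 then rankFrac rk (elSigmas k) else 0 :=
    fun i => key (fun σ => (σ i : ℕ) = 0)
  have hab0 : a + b ≠ 0 := by positivity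
  constructor
  · ext i j
    fin_cases i <;> fin_cases j <;>
      simp only [Matrix.of_apply, hs, Fin.sum_univ_five] <;>
      norm_num (config := { decide := true }) [elSigmas, Matrix.cons_val_zero,
        Matrix.cons_val_one, Matrix.head_cons, Matrix.cons_val_two, Matrix.cons_val_three, Matrix.cons_val_four,
        Matrix.head_fin_const, Matrix.vecHead, Matrix.vecTail] <;>
      (try simp only [h1, h2, h3, h4, h5]) <;>
      (first | ring1 | (field_simp [hab0]; done) | (field_simp [hab0]; ring1))
  · funext i
    fin_cases i <;>
      simp only [hp, Fin.sum_univ_five] <;>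
      norm_num (config := { decide := true }) [elSigmas, Matrix.cons_val_zero,
        Matrix.cons_val_one, Matrix.head_cons, Matrix.cons_val_two, Matrix.cons_val_three, Matrix.cons_val_four,
        Matrix.head_fin_const, Matrix.vecHead, Matrix.vecTail] <;>
      (try simp only [h1, h2, h3, h4, h5]) <;>
      (first | ring1 | (field_simp [hab0]; ring1))
end
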